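/- arXiv:1904.08411 — 3 statements merged into one kernel-verified Lean document; each statement's English description precedes it below -/
import Mathlib

section
/- Let u₁ and u₂ be harmonic functions on ℝ³ \ B̄_R that tend to 0 at infinity. If the normal derivatives agree, ∂u₁/∂ν = ∂u₂/∂ν on ∂B_R, then u₁ = u₂ on ℝ³ \ B̄_R. -/
/-!
Put `v = u₁ - u₂`: it is harmonic, tends to `0` at infinity and has vanishing normal derivative
on `‖x‖ = R`, and by symmetry it suffices to show `v ≤ 0`. Let `M` be the maximum of `v` on the
sphere and `M⁺ = max M 0`. On an annulus `R ≤ ‖x‖ ≤ ρ` the function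
`v - M⁺ R / ‖x‖ + ε ‖x‖²` has positive Laplacian, so it has no interior local maximum (second
derivative test along the coordinate lines); it is `≤ ε R²` on the inner sphere and small on the
outer one once `ρ` is large, by the decay of `v`. Letting `ε → 0` gives `v ≤ M⁺ R / ‖x‖`. If
`M > 0`, this barrier touches `v` at a maximum point `x₀` of the sphere, so along the outward ray
`v ((1 + t) • x₀) - M / (1 + t) ≤ 0` with equality at `t = 0`; its derivative there is
`Dv(x₀) x₀ + M = M > 0`, contradicting the Neumann condition. Hence `M ≤ 0` and `v ≤ 0`.
-/

noncomputable section

abbrev E3 := EuclideanSpace ℝ (Fin 3)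

/-- The Laplacian of a real-valued function on ℝ³. -/
def lap (u : E3 → ℝ) (x : E3) : ℝ :=
  ∑ i : Fin 3,
    fderiv ℝ (fun y => fderiv ℝ u y (EuclideanSpace.single i 1)) x (EuclideanSpace.single i 1)

/-- `u` is harmonic on a set `s`. -/
def HarmonicOn3 (u : E3 → ℝ) (s : Set E3) : Prop :=
  ContDiffOn ℝ 2 u s ∧ ∀ x ∈ s, lap u x = 0

open Filter Set Topology

section LineDerivatives

variable {E : Type*} [NormedAddCommGroup E] [NormedSpace ℝ E]

def HasLineSecondDeriv (u : E → ℝ) (x e : E) (c : ℝ) : Prop :=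
  ∃ g' : ℝ → ℝ, (∀ᶠ t in 𝓝 0, HasDerivAt (fun s => u (x + s • e)) (g' t) t) ∧ HasDerivAt g' c 0

lemma hasDerivAt_line (x e : E) (t : ℝ) : HasDerivAt (fun s : ℝ => x + s • e) e t := by
  simpa using ((hasDerivAt_id t).smul_const e).const_add x

namespace HasLineSecondDeriv

variable {u w : E → ℝ} {x e : E} {c d : ℝ}

lemma add (hu : HasLineSecondDeriv u x e c) (hw : HasLineSecondDeriv w x e d) :
    HasLineSecondDeriv (fun y => u y + w y) x e (c + d) := by
  obtain ⟨g', hg, hg'⟩ := hu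
  obtain ⟨h', hh, hh'⟩ := hw
  exact ⟨fun t => g' t + h' t, (hg.and hh).mono fun t ht => ht.1.add ht.2, hg'.add hh'⟩

lemma sub (hu : HasLineSecondDeriv u x e c) (hw : HasLineSecondDeriv w x e d) :
    HasLineSecondDeriv (fun y => u y - w y) x e (c - d) := by
  obtain ⟨g', hg, hg'⟩ := hu
  obtain ⟨h', hh, hh'⟩ := hw
  exact ⟨fun t => g' t - h' t, (hg.and hh).mono fun t ht => ht.1.sub ht.2, hg'.sub hh'⟩

lemma const_mul (a : ℝ) (hu : HasLineSecondDeriv u x e c) :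
    HasLineSecondDeriv (fun y => a * u y) x e (a * c) := by
  obtain ⟨g', hg, hg'⟩ := hu
  exact ⟨fun t => a * g' t, hg.mono fun t ht => ht.const_mul a, hg'.const_mul a⟩

lemma nonpos_of_isLocalMax (h : HasLineSecondDeriv u x e c) (hmax : IsLocalMax u x) :
    c ≤ 0 := by
  obtain ⟨g', hg, hg'⟩ := h
  set g : ℝ → ℝ := fun s => u (x + s • e)
  have hgmax : IsLocalMax g 0 := by
    have : IsLocalMax u ((fun s : ℝ => x + s • e) 0) := by simpa using hmax
    exact this.comp_continuous (g := fun s : ℝ => x + s • e) (hasDerivAt_line x e 0).continuousAt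
  have hderiv2 : deriv (deriv g) 0 = c :=
    (hg'.congr_of_eventuallyEq (hg.mono fun t ht => ht.deriv)).deriv
  by_contra! hpos
  -- a strict second-derivative minimum that is also a maximum would make `g` locally constant
  have hmin : IsLocalMin g 0 :=
    isLocalMin_of_deriv_deriv_pos (hderiv2 ▸ hpos) hgmax.deriv_eq_zero
      hg.self_of_nhds.continuousAt
  have hconst : g =ᶠ[𝓝 0] fun _ => g 0 :=
    (hgmax.and hmin).mono fun t ht => le_antisymm ht.1 ht.2
  have : deriv (deriv g) 0 = 0 := by
    rw [hconst.deriv.deriv_eq]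
    simp
  linarith

end HasLineSecondDeriv

lemma ContDiffAt.hasLineSecondDeriv {u : E → ℝ} {x : E} (hu : ContDiffAt ℝ 2 u x) (e : E) :
    HasLineSecondDeriv u x e (fderiv ℝ (fun y => fderiv ℝ u y e) x e) := by
  have hline_tendsto : Tendsto (fun s : ℝ => x + s • e) (𝓝 0) (𝓝 x) := by
    simpa using (hasDerivAt_line x e 0).continuousAt.tendsto
  have hdiff : ∀ᶠ y in 𝓝 x, DifferentiableAt ℝ u y :=
    (hu.eventually (by simp)).mono fun y hy => hy.differentiableAt (by norm_num)
  have hF : DifferentiableAt ℝ (fun y => fderiv ℝ u y e) x :=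
    ((hu.fderiv_right (m := 1) le_rfl).differentiableAt one_ne_zero).clm_apply
      (differentiableAt_const e)
  refine ⟨fun t => fderiv ℝ u (x + t • e) e, ?_, ?_⟩
  · exact (hline_tendsto.eventually hdiff).mono fun t ht =>
      ht.hasFDerivAt.comp_hasDerivAt t (hasDerivAt_line x e t)
  · have hF' : HasFDerivAt (fun y => fderiv ℝ u y e) (fderiv ℝ (fun y => fderiv ℝ u y e) x)
        (x + (0 : ℝ) • e) := by simpa using hF.hasFDerivAt
    exact hF'.comp_hasDerivAt 0 (hasDerivAt_line x e 0)

end LineDerivatives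

section InnerProduct

variable {F : Type*} [NormedAddCommGroup F] [InnerProductSpace ℝ F]

open RealInnerProductSpace

lemma HasDerivAt.norm {f : ℝ → F} {f' : F} {t : ℝ} (hf : HasDerivAt f f' t) (h0 : f t ≠ 0) :
    HasDerivAt (fun s => ‖f s‖) (⟪f t, f'⟫ / ‖f t‖) t := by
  have hsq : ‖f t‖ ^ 2 ≠ 0 := by positivity
  have := hf.norm_sq.sqrt hsq
  simp only [Real.sqrt_sq (norm_nonneg _)] at this
  convert this using 1
  field_simp

lemma hasLineSecondDeriv_norm_sq (x e : F) :
    HasLineSecondDeriv (fun y : F => ‖y‖ ^ 2) x e (2 * ‖e‖ ^ 2) := by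
  refine ⟨fun t => 2 * ⟪x + t • e, e⟫, .of_forall fun t => (hasDerivAt_line x e t).norm_sq, ?_⟩
  have := ((hasDerivAt_line x e 0).inner ℝ (hasDerivAt_const (0 : ℝ) e)).const_mul 2
  simpa [real_inner_self_eq_norm_sq] using this

lemma hasLineSecondDeriv_inv_norm {x : F} (hx : x ≠ 0) (e : F) :
    HasLineSecondDeriv (fun y : F => ‖y‖⁻¹) x e
      ((3 * ⟪x, e⟫ ^ 2 - ‖x‖ ^ 2 * ‖e‖ ^ 2) / ‖x‖ ^ 5) := by
  have hnorm : ∀ t, x + t • e ≠ 0 →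
      HasDerivAt (fun s : ℝ => ‖x + s • e‖) (⟪x + t • e, e⟫ / ‖x + t • e‖) t :=
    fun t ht => (hasDerivAt_line x e t).norm ht
  have hne : ∀ᶠ t in 𝓝 (0 : ℝ), x + t • e ≠ 0 := by
    have : ContinuousAt (fun s : ℝ => x + s • e) 0 := (hasDerivAt_line x e 0).continuousAt
    simpa using this.eventually_ne (by simpa using hx)
  refine ⟨fun t => -⟪x + t • e, e⟫ / ‖x + t • e‖ ^ 3, hne.mono fun t ht => ?_, ?_⟩
  · have hpos : 0 < ‖x + t • e‖ := norm_pos_iff.mpr ht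
    refine ((hnorm t ht).fun_inv hpos.ne').congr_deriv ?_
    field_simp
  · have hpos : 0 < ‖x‖ := norm_pos_iff.mpr hx
    have hnum := ((hasDerivAt_line x e 0).inner ℝ (hasDerivAt_const (0 : ℝ) e)).fun_neg
    have hden := (hnorm 0 (by simpa using hx)).fun_pow 3
    refine (hnum.fun_div hden (by simp [hpos.ne'])).congr_deriv ?_
    simp only [zero_smul, add_zero, real_inner_self_eq_norm_sq, inner_zero_right]
    field_simp
    ring

end InnerProduct

section Laplacian

def HasLineLaplacianAt (u : E3 → ℝ) (x : E3) (L : ℝ) : Prop :=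
  ∃ c : Fin 3 → ℝ, (∀ i, HasLineSecondDeriv u x (EuclideanSpace.single i 1) (c i)) ∧ ∑ i, c i = L

namespace HasLineLaplacianAt

variable {u w : E3 → ℝ} {x : E3} {L K : ℝ}

lemma add (hu : HasLineLaplacianAt u x L) (hw : HasLineLaplacianAt w x K) :
    HasLineLaplacianAt (fun y => u y + w y) x (L + K) := by
  obtain ⟨c, hc, rfl⟩ := hu
  obtain ⟨d, hd, rfl⟩ := hw
  exact ⟨c + d, fun i => (hc i).add (hd i), Finset.sum_add_distrib⟩

lemma sub (hu : HasLineLaplacianAt u x L) (hw : HasLineLaplacianAt w x K) :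
    HasLineLaplacianAt (fun y => u y - w y) x (L - K) := by
  obtain ⟨c, hc, rfl⟩ := hu
  obtain ⟨d, hd, rfl⟩ := hw
  exact ⟨c - d, fun i => (hc i).sub (hd i), Finset.sum_sub_distrib ..⟩

lemma const_mul (a : ℝ) (hu : HasLineLaplacianAt u x L) :
    HasLineLaplacianAt (fun y => a * u y) x (a * L) := by
  obtain ⟨c, hc, rfl⟩ := hu
  exact ⟨fun i => a * c i, fun i => (hc i).const_mul a, (Finset.mul_sum ..).symm⟩

lemma not_isLocalMax (h : HasLineLaplacianAt u x L) (hL : 0 < L) : ¬IsLocalMax u x := by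
  intro hmax
  obtain ⟨c, hc, rfl⟩ := h
  exact hL.not_ge (Finset.sum_nonpos fun i _ => (hc i).nonpos_of_isLocalMax hmax)

end HasLineLaplacianAt

lemma ContDiffAt.hasLineLaplacianAt {u : E3 → ℝ} {x : E3} (hu : ContDiffAt ℝ 2 u x) :
    HasLineLaplacianAt u x (lap u x) :=
  ⟨_, fun _ => hu.hasLineSecondDeriv _, rfl⟩

lemma hasLineLaplacianAt_norm_sq (x : E3) : HasLineLaplacianAt (fun y => ‖y‖ ^ 2) x 6 :=
  ⟨_, fun _ => hasLineSecondDeriv_norm_sq x _, by norm_num⟩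

lemma hasLineLaplacianAt_inv_norm {x : E3} (hx : x ≠ 0) :
    HasLineLaplacianAt (fun y => ‖y‖⁻¹) x 0 := by
  refine ⟨_, fun i => hasLineSecondDeriv_inv_norm hx _, ?_⟩
  rw [← Finset.sum_div, Finset.sum_sub_distrib, ← Finset.mul_sum]
  simp [EuclideanSpace.inner_single_right, EuclideanSpace.real_norm_sq_eq]

end Laplacian

section ProperSpace

variable {E : Type*} [NormedAddCommGroup E] [ProperSpace E]

lemma le_on_annulus_of_le_on_spheres {R ρ B : ℝ} {w : E → ℝ}
    (hw : ContinuousOn w {y | R ≤ ‖y‖ ∧ ‖y‖ ≤ ρ})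
    (hloc : ∀ y, R < ‖y‖ → ‖y‖ < ρ → ¬IsLocalMax w y)
    (hB : ∀ y, ‖y‖ = R ∨ ‖y‖ = ρ → w y ≤ B) :
    ∀ x, R ≤ ‖x‖ → ‖x‖ ≤ ρ → w x ≤ B := by
  intro x hxR hxρ
  set K : Set E := {y | R ≤ ‖y‖ ∧ ‖y‖ ≤ ρ}
  have hK : IsCompact K :=
    Metric.isCompact_of_isClosed_isBounded
      ((isClosed_le continuous_const continuous_norm).inter
        (isClosed_le continuous_norm continuous_const))
      ((Metric.isBounded_closedBall (x := 0) (r := ρ)).subset fun y hy => by simpa using hy.2)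
  obtain ⟨y, ⟨hyR, hyρ⟩, hmax⟩ := hK.exists_isMaxOn ⟨x, hxR, hxρ⟩ hw
  refine (hmax ⟨hxR, hxρ⟩).trans (hB y ?_)
  by_contra! hy
  have hopen : IsOpen {y : E | R < ‖y‖ ∧ ‖y‖ < ρ} :=
    (isOpen_lt continuous_const continuous_norm).inter (isOpen_lt continuous_norm continuous_const)
  have hyint : R < ‖y‖ ∧ ‖y‖ < ρ := ⟨hyR.lt_of_ne (Ne.symm hy.1), hyρ.lt_of_ne hy.2⟩
  exact hloc y hyint.1 hyint.2 <| hmax.isLocalMax <|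
    Filter.mem_of_superset (hopen.mem_nhds hyint) fun z hz => ⟨hz.1.le, hz.2.le⟩

lemma exists_abs_lt_of_tendsto_cocompact {v : E → ℝ} (hv : Tendsto v (cocompact E) (𝓝 0)) {δ : ℝ} (hδ : 0 < δ) :
    ∃ r, ∀ y, r ≤ ‖y‖ → |v y| < δ := by
  rw [← Metric.cobounded_eq_cocompact, ← comap_norm_atTop] at hv
  have := hv.eventually (eventually_abs_sub_lt 0 hδ)
  obtain ⟨r, hr⟩ := eventually_atTop.mp (eventually_comap.mp this)
  exact ⟨r, fun y hy => by simpa using hr _ hy y rfl⟩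

end ProperSpace

lemma le_mul_div_norm_of_hasLineLaplacianAt_zero {R M : ℝ} (hR : 0 < R) (hM : 0 ≤ M)
    {v : E3 → ℝ} (hvc : ContinuousOn v {x | R ≤ ‖x‖})
    (hv : ∀ x, R < ‖x‖ → HasLineLaplacianAt v x 0)
    (hdecay : Tendsto v (cocompact E3) (𝓝 0))
    (hbdry : ∀ x, ‖x‖ = R → v x ≤ M) :
    ∀ x, R ≤ ‖x‖ → v x ≤ M * R / ‖x‖ := by
  intro x hx
  refine le_of_forall_pos_le_add fun δ hδ => ?_
  obtain ⟨r, hr⟩ := exists_abs_lt_of_tendsto_cocompact hdecay (half_pos hδ)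
  set ρ := max r (‖x‖ + R)
  have hRρ : R < ρ := by have := le_max_right r (‖x‖ + R); linarith
  have hxρ : ‖x‖ ≤ ρ := by have := le_max_right r (‖x‖ + R); linarith
  set ε := δ / (2 * ρ ^ 2)
  have hε : 0 < ε := by positivity
  have hερ : ε * ρ ^ 2 = δ / 2 := by
    have : ρ ≠ 0 := (hR.trans hRρ).ne'
    simp only [ε]
    field_simp
  set w : E3 → ℝ := fun y => v y - M * R * ‖y‖⁻¹ + ε * ‖y‖ ^ 2
  have hwc : ContinuousOn w {y | R ≤ ‖y‖ ∧ ‖y‖ ≤ ρ} := by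
    refine ((hvc.mono fun y hy => hy.1).sub (continuousOn_const.mul ?_)).add
      (continuousOn_const.mul (continuous_norm.pow 2).continuousOn)
    exact continuous_norm.continuousOn.inv₀ fun y hy => (hR.trans_le hy.1).ne'
  have hloc : ∀ y, R < ‖y‖ → ‖y‖ < ρ → ¬IsLocalMax w y := fun y hyR _ => by
    have hy0 : y ≠ 0 := norm_pos_iff.mp (hR.trans hyR)
    refine (((hv y hyR).sub ((hasLineLaplacianAt_inv_norm hy0).const_mul (M * R))).add
      ((hasLineLaplacianAt_norm_sq y).const_mul ε)).not_isLocalMax (by linarith)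
  have hwB : ∀ y, ‖y‖ = R ∨ ‖y‖ = ρ → w y ≤ δ := by
    rintro y (hy | hy)
    · have hεR : ε * R ^ 2 ≤ δ / 2 := hερ ▸ by gcongr
      have : w y = v y - M + ε * R ^ 2 := by simp only [w, hy]; field_simp
      linarith [hbdry y hy]
    · have hvy : v y < δ / 2 := (le_abs_self _).trans_lt (hr y (hy ▸ le_max_left _ _))
      have : 0 ≤ M * R * ρ⁻¹ := by positivity
      simp only [w, hy]
      linarith
  have hwx := le_on_annulus_of_le_on_spheres hwc hloc hwB x hx hxρ
  have : 0 ≤ ε * ‖x‖ ^ 2 := by positivity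
  simp only [w] at hwx
  rw [div_eq_mul_inv]
  linarith

lemma nonpos_of_le_mul_div_norm {E : Type*} [NormedAddCommGroup E] [NormedSpace ℝ E]
    {R M : ℝ} (hR : 0 < R) {v : E → ℝ} {x₀ : E} (hx₀ : ‖x₀‖ = R) (hv₀ : v x₀ = M)
    (hdiff : DifferentiableAt ℝ v x₀) (hneu : fderiv ℝ v x₀ x₀ = 0)
    (hle : ∀ x, R ≤ ‖x‖ → v x ≤ M * R / ‖x‖) : M ≤ 0 := by
  set g : ℝ → ℝ := fun t => v ((1 + t) • x₀) - M / (1 + t)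
  have hg : HasDerivAt g M 0 := by
    have hray : HasDerivAt (fun t : ℝ => (1 + t) • x₀) x₀ 0 := by
      simpa using ((hasDerivAt_id (0 : ℝ)).const_add 1).smul_const x₀
    have hv : HasFDerivAt v (fderiv ℝ v x₀) ((1 + (0 : ℝ)) • x₀) := by
      simpa using hdiff.hasFDerivAt
    have hinv : HasDerivAt (fun t : ℝ => M / (1 + t)) (-M) 0 := by
      simpa [div_eq_mul_inv] using
        ((hasDerivAt_id (0 : ℝ)).const_add 1).fun_inv (by norm_num) |>.const_mul M
    exact ((hv.comp_hasDerivAt 0 hray).sub hinv).congr_deriv (by simp [hneu])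
  have hgle : ∀ t > 0, g t ≤ 0 := fun t ht => by
    have hnorm : ‖(1 + t) • x₀‖ = (1 + t) * R := by
      rw [norm_smul, hx₀, Real.norm_of_nonneg (by linarith)]
    have := hle _ (by rw [hnorm]; nlinarith)
    rw [hnorm, mul_div_mul_right _ _ hR.ne'] at this
    simp only [g]
    linarith
  have hslope := (hasDerivAt_iff_tendsto_slope.mp hg).mono_left (nhdsGT_le_nhdsNE 0)
  refine le_of_tendsto hslope (eventually_nhdsWithin_of_forall fun t (ht : 0 < t) => ?_)
  rw [slope_def_field, show g 0 = 0 by simp [g, hv₀], sub_zero, sub_zero]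
  exact div_nonpos_of_nonpos_of_nonneg (hgle t ht) ht.le

lemma nonpos_of_hasLineLaplacianAt_zero {R : ℝ} (hR : 0 < R) {v : E3 → ℝ}
    (hvc : ContinuousOn v {x | R ≤ ‖x‖})
    (hdiff : ∀ x, ‖x‖ = R → DifferentiableAt ℝ v x)
    (hneu : ∀ x, ‖x‖ = R → fderiv ℝ v x x = 0)
    (hv : ∀ x, R < ‖x‖ → HasLineLaplacianAt v x 0)
    (hdecay : Tendsto v (cocompact E3) (𝓝 0)) :
    ∀ x, R ≤ ‖x‖ → v x ≤ 0 := by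
  obtain ⟨x₀, hx₀, hmax⟩ := (isCompact_sphere (0 : E3) R).exists_isMaxOn
    (NormedSpace.sphere_nonempty.mpr hR.le)
    (hvc.mono fun x hx => (mem_sphere_zero_iff_norm.mp hx).ge)
  rw [mem_sphere_zero_iff_norm] at hx₀
  have hbound := le_mul_div_norm_of_hasLineLaplacianAt_zero hR (le_max_right (v x₀) 0) hvc hv
    hdecay fun x hx => (hmax (mem_sphere_zero_iff_norm.mpr hx)).trans (le_max_left _ _)
  have hM : v x₀ ≤ 0 := by
    by_contra! hM
    rw [max_eq_left hM.le] at hbound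
    exact hM.not_ge (nonpos_of_le_mul_div_norm hR hx₀ rfl (hdiff x₀ hx₀) (hneu x₀ hx₀) hbound)
  intro x hx
  simpa [max_eq_right hM] using hbound x hx

lemma HarmonicOn3.hasLineLaplacianAt_zero {u : E3 → ℝ} {U : Set E3} (hu : HarmonicOn3 u U)
    (hU : IsOpen U) {x : E3} (hx : x ∈ U) : HasLineLaplacianAt u x 0 :=
  hu.2 x hx ▸ (hu.1.contDiffAt (hU.mem_nhds hx)).hasLineLaplacianAt

lemma HarmonicOn3.sub_nonpos {R : ℝ} (hR : 0 < R) {u w : E3 → ℝ} {U : Set E3}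
    (hU : IsOpen U) (hsub : {x : E3 | R ≤ ‖x‖} ⊆ U) (hu : HarmonicOn3 u U) (hw : HarmonicOn3 w U)
    (hdecay_u : Tendsto u (cocompact E3) (𝓝 0)) (hdecay_w : Tendsto w (cocompact E3) (𝓝 0))
    (hneu : ∀ x : E3, ‖x‖ = R → inner ℝ (gradient u x) x = inner ℝ (gradient w x) x) :
    ∀ x, R ≤ ‖x‖ → u x - w x ≤ 0 := by
  have hdiff : ∀ {f}, HarmonicOn3 f U → ∀ x, ‖x‖ = R → DifferentiableAt ℝ f x :=
    fun hf x hx => (hf.1.contDiffAt (hU.mem_nhds (hsub hx.ge))).differentiableAt (by norm_num)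
  have hlap : ∀ x, R < ‖x‖ → HasLineLaplacianAt (fun y => u y - w y) x 0 := fun x hx => by
    simpa using (hu.hasLineLaplacianAt_zero hU (hsub hx.le)).sub
      (hw.hasLineLaplacianAt_zero hU (hsub hx.le))
  refine nonpos_of_hasLineLaplacianAt_zero hR
    ((hu.1.continuousOn.sub hw.1.continuousOn).mono hsub)
    (fun x hx => (hdiff hu x hx).sub (hdiff hw x hx)) (fun x hx => ?_) hlap
    (by simpa using hdecay_u.sub hdecay_w)
  rw [fderiv_fun_sub (hdiff hu x hx) (hdiff hw x hx), sub_apply,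
    ← inner_gradient_left, ← inner_gradient_left, hneu x hx, sub_self]

/-- Exterior uniqueness for the Neumann problem: two harmonic functions on the exterior of
the ball `B_R` (smooth up to the boundary), decaying at infinity, whose normal derivatives
agree on `∂B_R`, coincide on `ℝ³ \ B̄_R`. -/
theorem stmt2 (R : ℝ) (hR : 0 < R) (u1 u2 : E3 → ℝ) (U : Set E3)
    (hU : IsOpen U) (hsub : {x : E3 | R ≤ ‖x‖} ⊆ U)
    (h1 : HarmonicOn3 u1 U) (h2 : HarmonicOn3 u2 U)
    (hdecay1 : Filter.Tendsto u1 (Filter.cocompact E3) (nhds 0))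
    (hdecay2 : Filter.Tendsto u2 (Filter.cocompact E3) (nhds 0))
    (hneu : ∀ x : E3, ‖x‖ = R →
      (inner ℝ (gradient u1 x) x : ℝ) = (inner ℝ (gradient u2 x) x : ℝ)) :
    ∀ x : E3, R < ‖x‖ → u1 x = u2 x := by
  intro x hx
  have h12 := h1.sub_nonpos hR hU hsub h2 hdecay1 hdecay2 hneu x hx.le
  have h21 := h2.sub_nonpos hR hU hsub h1 hdecay2 hdecay1 (fun y hy => (hneu y hy).symm) x hx.le
  linarith
end
end

section
/- Let z_l^{(1)}, z_l^{(2)} ∈ ℝ³ (l = 1,…,L) be points and c_l^{(1)}, c_l^{(2)} ∈ ℝ³ nonzero vectors such that all the points z_l^{(1)}, z_l^{(2)} are pairwise distinct unless equal by index and superscript. If F(x) := Σ_{l=1}^{L} [⟨∇Γ₀(x - z_l^{(1)}), c_l^{(1)}⟩ - ⟨∇Γ₀(x - z_l^{(2)}), c_l^{(2)}⟩] = 0 for all x in an open set exterior to a ball containing all the points, then z_l^{(1)} = z_l^{(2)} and c_l^{(1)} = c_l^{(2)} for every l (after suitable matching of indices), provided the points z_l^{(j)} within each family are pairwise distinct.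 -/
/-!
Off the finitely many poles the field is real-analytic, and the complement of a finite set in ℝ³
is connected, so the field vanishes identically there. Near a pole `p` it is the dipole potential
of the total moment at `p` plus a function continuous at `p`; along the ray `p + t • a` the dipole
potential of `a ≠ 0` grows like `t⁻²`, so every total moment vanishes. Since the poles within each
family are distinct, this matches every dipole of the first family with one of the second.
-/

noncomputable section

def Γ₀ (x : E3) : ℝ := -1 / (4 * Real.pi * ‖x‖)

open RealInnerProductSpace Filter Topology
open scoped ContDiff

theorem hasGradientAt_Γ₀ {y : E3} (hy : y ≠ 0) :
    HasGradientAt Γ₀ ((4 * Real.pi * ‖y‖ ^ 3)⁻¹ • y) y := by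
  have hr : 0 < ‖y‖ := norm_pos_iff.2 hy
  have hnorm : HasFDerivAt (‖·‖) (‖y‖⁻¹ • innerSL ℝ y) y := by
    have h := (hasStrictFDerivAt_norm_sq y).hasFDerivAt.sqrt (by positivity)
    simp only [Real.sqrt_sq (norm_nonneg _)] at h
    refine h.congr_fderiv ?_
    ext v
    simp only [one_div, mul_inv_rev, smul_apply, coe_innerSL_apply,
      nsmul_eq_mul, Nat.cast_ofNat, smul_eq_mul]
    field_simp
  have hΓ : Γ₀ = fun x ↦ -(4 * Real.pi)⁻¹ * ‖x‖⁻¹ := by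
    funext x; simp only [Γ₀]; field_simp
  rw [hasGradientAt_iff_hasFDerivAt, hΓ]
  refine (((hasDerivAt_inv hr.ne').comp_hasFDerivAt y hnorm).const_mul _).congr_fderiv ?_
  ext v
  simp only [mul_inv_rev, neg_smul, smul_neg, neg_neg, smul_apply,
    coe_innerSL_apply, smul_eq_mul, map_smul, InnerProductSpace.toDual_apply_apply]
  field_simp

theorem analyticAt_gradient_Γ₀ {y : E3} (hy : y ≠ 0) : AnalyticAt ℝ (gradient Γ₀) y := by
  have hΓ : AnalyticAt ℝ Γ₀ y := by
    have hn : AnalyticAt ℝ (‖·‖) y := (contDiffAt_norm ℝ hy (n := ω)).analyticAt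
    refine analyticAt_const.div (analyticAt_const.mul hn) ?_
    have := norm_pos_iff.2 hy
    positivity
  exact ((InnerProductSpace.toDual ℝ E3).symm.toContinuousLinearEquiv.toContinuousLinearMap.analyticAt
    _).comp hΓ.fderiv

def dipolePotential (z c x : E3) : ℝ := ⟪gradient Γ₀ (x - z), c⟫

theorem analyticAt_dipolePotential (c : E3) {z x : E3} (hx : x ≠ z) :
    AnalyticAt ℝ (dipolePotential z c) x := by
  have hgrad := (analyticAt_gradient_Γ₀ (sub_ne_zero.2 hx)).comp (f := (· - z))
    (analyticAt_id.sub analyticAt_const)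
  exact (((innerSL ℝ c).analyticAt _).comp hgrad).congr
    (.of_forall fun y ↦ real_inner_comm (gradient Γ₀ (y - z)) c)

theorem dipolePotential_sum {ι : Type*} (z : E3) (s : Finset ι) (c : ι → E3) (x : E3) :
    dipolePotential z (∑ i ∈ s, c i) x = ∑ i ∈ s, dipolePotential z (c i) x :=
  inner_sum _ _ _

theorem dipolePotential_add_smul (p : E3) {a : E3} (ha : a ≠ 0) {t : ℝ} (ht : 0 < t) :
    dipolePotential p a (p + t • a) = (4 * Real.pi * ‖a‖)⁻¹ * t⁻¹ ^ 2 := by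
  have hta : t • a ≠ 0 := smul_ne_zero ht.ne' ha
  rw [dipolePotential, add_sub_cancel_left, (hasGradientAt_Γ₀ hta).gradient, real_inner_smul_left,
    real_inner_smul_left, real_inner_self_eq_norm_sq, norm_smul, Real.norm_of_nonneg ht.le]
  have := norm_pos_iff.2 ha
  field_simp

theorem tendsto_dipolePotential_add_smul_atTop (p : E3) {a : E3} (ha : a ≠ 0) :
    Tendsto (fun t : ℝ ↦ dipolePotential p a (p + t • a)) (𝓝[>] 0) atTop := by
  have hc : 0 < (4 * Real.pi * ‖a‖)⁻¹ := by
    have := norm_pos_iff.2 ha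
    positivity
  refine (((tendsto_pow_atTop two_ne_zero).comp tendsto_inv_nhdsGT_zero).const_mul_atTop
    hc).congr' ?_
  filter_upwards [self_mem_nhdsWithin] with t ht
  exact (dipolePotential_add_smul p ha ht).symm

theorem eq_zero_of_dipolePotential_add_eq_zero {p a : E3} {φ : E3 → ℝ} (hφ : ContinuousAt φ p)
    (h : ∀ᶠ x in 𝓝[≠] p, dipolePotential p a x + φ x = 0) : a = 0 := by
  by_contra ha
  have hray : Tendsto (fun t : ℝ ↦ p + t • a) (𝓝[>] 0) (𝓝[≠] p) := by
    refine tendsto_nhdsWithin_iff.2 ⟨?_, ?_⟩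
    · have : Tendsto (fun t : ℝ ↦ p + t • a) (𝓝 0) (𝓝 p) := by
        simpa using ((tendsto_id (x := 𝓝 (0 : ℝ))).smul_const a).const_add p
      exact this.mono_left nhdsWithin_le_nhds
    · filter_upwards [self_mem_nhdsWithin] with t (ht : 0 < t)
      simpa using smul_ne_zero ht.ne' ha
  have hbounded : Tendsto (fun t : ℝ ↦ dipolePotential p a (p + t • a)) (𝓝[>] 0) (𝓝 (-φ p)) := by
    refine ((hφ.tendsto.comp (hray.mono_right nhdsWithin_le_nhds)).neg).congr' ?_
    filter_upwards [hray.eventually h] with t ht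
    simp only [Function.comp_apply]
    linarith
  exact not_tendsto_nhds_of_tendsto_atTop (tendsto_dipolePotential_add_smul_atTop p ha) _ hbounded

section DipoleField

variable {ι : Type*} [Fintype ι] (z c : ι → E3)

def dipoleField (x : E3) : ℝ := ∑ i, dipolePotential (z i) (c i) x

theorem analyticOnNhd_dipoleField : AnalyticOnNhd ℝ (dipoleField z c) (Set.range z)ᶜ :=
  fun _ hx ↦ Finset.analyticAt_fun_sum _ fun i _ ↦
    analyticAt_dipolePotential _ fun h ↦ hx ⟨i, h.symm⟩

theorem dipoleField_eqOn_zero_of_eqOn_zero {V : Set E3} (hV : IsOpen V) (hVne : V.Nonempty)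
    (hVz : V ⊆ (Set.range z)ᶜ) (h : Set.EqOn (dipoleField z c) 0 V) :
    Set.EqOn (dipoleField z c) 0 (Set.range z)ᶜ := by
  obtain ⟨x₀, hx₀⟩ := hVne
  have hconn : IsConnected (Set.range z)ᶜ :=
    (Set.finite_range z).countable.isConnected_compl_of_one_lt_rank
      (by rw [← Module.finrank_eq_rank]; simp)
  exact (analyticOnNhd_dipoleField z c).eqOn_zero_of_preconnected_of_eventuallyEq_zero
    hconn.isPreconnected (hVz hx₀) (mem_of_superset (hV.mem_nhds hx₀) h)

theorem sum_filter_eq_zero_of_dipoleField_eqOn_zero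
    (h : Set.EqOn (dipoleField z c) 0 (Set.range z)ᶜ) (p : E3) :
    ∑ i with z i = p, c i = 0 := by
  classical
  set φ : E3 → ℝ := fun x ↦ ∑ i with z i ≠ p, dipolePotential (z i) (c i) x
  have hφ : ContinuousAt φ p :=
    (Finset.analyticAt_fun_sum _ fun i hi ↦
      analyticAt_dipolePotential _ (Ne.symm (Finset.mem_filter.1 hi).2)).continuousAt
  refine eq_zero_of_dipolePotential_add_eq_zero hφ ?_
  have hpoles : ∀ᶠ x in 𝓝[≠] p, x ∉ Set.range z := by
    have : (Set.range z \ {p})ᶜ ∈ 𝓝 p :=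
      (Set.finite_range z).sdiff.isClosed.isOpen_compl.mem_nhds (by simp)
    filter_upwards [nhdsWithin_le_nhds this, self_mem_nhdsWithin] with x hx (hxp : x ≠ p) hxz
    exact hx ⟨hxz, hxp⟩
  filter_upwards [hpoles] with x hx
  calc dipolePotential p (∑ i with z i = p, c i) x + φ x = dipoleField z c x := by
        rw [dipoleField, ← Finset.sum_filter_add_sum_filter_not _ (z · = p)
          (fun i ↦ dipolePotential (z i) (c i) x), dipolePotential_sum]
        congr 1
        exact Finset.sum_congr rfl fun i hi ↦ by rw [(Finset.mem_filter.1 hi).2]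
    _ = 0 := h hx

end DipoleField

theorem Function.Injective.exists_perm_comp_eq {ι α : Type*} [Finite ι] {f g : ι → α}
    (hf : Function.Injective f) (h : ∀ i, ∃ j, g j = f i) :
    ∃ σ : Equiv.Perm ι, ∀ i, g (σ i) = f i := by
  choose τ hτ using h
  have hτinj : Function.Injective τ := fun i i' hii' ↦ hf (by rw [← hτ, hii', hτ])
  exact ⟨Equiv.ofBijective τ hτinj.bijective_of_finite, hτ⟩

theorem stmt7_general (L : ℕ) (z1 z2 : Fin L → E3) (c1 c2 : Fin L → E3)
    (hz1 : Function.Injective z1) (hz2 : Function.Injective z2)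
    (hc1 : ∀ l, c1 l ≠ 0)
    (ρ : ℝ) (hρ1 : ∀ l, ‖z1 l‖ < ρ) (hρ2 : ∀ l, ‖z2 l‖ < ρ)
    (V : Set E3) (hV : IsOpen V) (hVne : V.Nonempty) (hVext : V ⊆ {x : E3 | ρ < ‖x‖})
    (hF : ∀ x ∈ V,
      ∑ l : Fin L, ((inner ℝ (gradient Γ₀ (x - z1 l)) (c1 l) : ℝ)
        - (inner ℝ (gradient Γ₀ (x - z2 l)) (c2 l) : ℝ)) = 0) :
    ∃ σ : Equiv.Perm (Fin L), ∀ l, z2 (σ l) = z1 l ∧ c2 (σ l) = c1 l := by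
  classical
  set z : Fin L ⊕ Fin L → E3 := Sum.elim z1 z2
  set c : Fin L ⊕ Fin L → E3 := Sum.elim c1 (-c2)
  have hVz : V ⊆ (Set.range z)ᶜ := by
    rintro x hx ⟨l | l, rfl⟩
    · exact (hρ1 l).not_gt (hVext hx)
    · exact (hρ2 l).not_gt (hVext hx)
  have hFV : Set.EqOn (dipoleField z c) 0 V := fun x hx ↦ by
    simpa [z, c, dipoleField, dipolePotential, Fintype.sum_sum_type, ← sub_eq_add_neg,
      Finset.sum_sub_distrib] using hF x hx
  have hmoment := sum_filter_eq_zero_of_dipoleField_eqOn_zero z c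
    (dipoleField_eqOn_zero_of_eqOn_zero z c hV hVne hVz hFV)
  have hmatch : ∀ l, ∃ m, (z2 m, c2 m) = (z1 l, c1 l) := by
    intro l
    have h := hmoment (z1 l)
    rw [Finset.sum_filter, Fintype.sum_sum_type] at h
    simp only [z, c, Sum.elim_inl, Sum.elim_inr, hz1.eq_iff, Finset.sum_ite_eq', Finset.mem_univ,
      if_true] at h
    obtain ⟨m, hm⟩ : ∃ m, z2 m = z1 l := by
      by_contra! hm
      exact hc1 l (by simpa [hm] using h)
    simp only [← hm, hz2.eq_iff, Finset.sum_ite_eq', Finset.mem_univ, if_true, Pi.neg_apply] at h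
    exact ⟨m, by rw [hm, add_neg_eq_zero.1 h]⟩
  have hpair : Function.Injective fun l ↦ (z1 l, c1 l) := fun l l' h ↦ hz1 (congrArg Prod.fst h)
  obtain ⟨σ, hσ⟩ := hpair.exists_perm_comp_eq hmatch
  exact ⟨σ, fun l ↦ Prod.ext_iff.1 (hσ l)⟩

/-- Uniqueness for sums of dipole potentials: if two families of dipoles (with pairwise
distinct poles within each family and nonzero strengths) produce the same field on a
nonempty open set exterior to a ball containing all poles, then the families coincide
after a suitable matching of indices. -/
theorem stmt7 (L : ℕ) (z1 z2 : Fin L → E3) (c1 c2 : Fin L → E3)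
    (hz1 : Function.Injective z1) (hz2 : Function.Injective z2)
    (hc1 : ∀ l, c1 l ≠ 0) (hc2 : ∀ l, c2 l ≠ 0)
    (ρ : ℝ) (hρ1 : ∀ l, ‖z1 l‖ < ρ) (hρ2 : ∀ l, ‖z2 l‖ < ρ)
    (V : Set E3) (hV : IsOpen V) (hVne : V.Nonempty) (hVext : V ⊆ {x : E3 | ρ < ‖x‖})
    (hF : ∀ x ∈ V,
      ∑ l : Fin L, ((inner ℝ (gradient Γ₀ (x - z1 l)) (c1 l) : ℝ)
        - (inner ℝ (gradient Γ₀ (x - z2 l)) (c2 l) : ℝ)) = 0) :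
    ∃ σ : Equiv.Perm (Fin L), ∀ l, z2 (σ l) = z1 l ∧ c2 (σ l) = c1 l :=
  stmt7_general L z1 z2 c1 c2 hz1 hz2 hc1 ρ hρ1 hρ2 V hV hVne hVext hF
end
end

section
/- Let D ⊂ ℝ³ be a bounded Lipschitz domain, μ⁽¹⁾, μ⁽²⁾, μ₀ > 0 with μ⁽¹⁾, μ⁽²⁾ ≠ μ₀, and set λ_j := (μ⁽ʲ⁾ + μ₀)/(2(μ⁽ʲ⁾ - μ₀)). Suppose g ∈ L²₀(∂D) is nonzero (mean-zero) and (1/(μ⁽¹⁾ - μ₀)) (½I + K*)(λ₁ I - K*)⁻¹[g] = (1/(μ⁽²⁾ - μ₀)) (½I + K*)(λ₂ I - K*)⁻¹[g] on ∂D, where K* := (K_D⁰)* is the adjoint Neumann–Poincaré operator. Then μ⁽¹⁾ = μ⁽²⁾. -/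
private lemma stmt15_aux {H : Type*} [AddCommGroup H] [Module ℝ H]
    (K : H →ₗ[ℝ] H) (b1 b2 μ0 : ℝ) (g ψ1 ψ2 : H)
    (h1 : K ψ1 = (1 / 2 + μ0 * b1) • ψ1 - g)
    (h2 : K ψ2 = (1 / 2 + μ0 * b2) • ψ2 - g)
    (hmain : b1 • ((1 / 2 : ℝ) • ψ1 + K ψ1) = b2 • ((1 / 2 : ℝ) • ψ2 + K ψ2)) :
    (b1 - b2) • ((1 / 4 : ℝ) • g - K (K g)) = 0 := by
  have h1' : K (K ψ1) = (1 / 2 + μ0 * b1) • K ψ1 - K g := by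
    have := congrArg K h1; simpa [map_sub, map_smul] using this
  have h2' : K (K ψ2) = (1 / 2 + μ0 * b2) • K ψ2 - K g := by
    have := congrArg K h2; simpa [map_sub, map_smul] using this
  have h1'' : K (K (K ψ1)) = (1 / 2 + μ0 * b1) • K (K ψ1) - K (K g) := by
    have := congrArg K h1'; simpa [map_sub, map_smul] using this
  have h2'' : K (K (K ψ2)) = (1 / 2 + μ0 * b2) • K (K ψ2) - K (K g) := by
    have := congrArg K h2'; simpa [map_sub, map_smul] using this
  have M1 : b1 • ((1 / 2 : ℝ) • K ψ1 + K (K ψ1)) = b2 • ((1 / 2 : ℝ) • K ψ2 + K (K ψ2)) := by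
    have := congrArg K hmain; simpa [map_add, map_smul] using this
  have M2 : b1 • ((1 / 2 : ℝ) • K (K ψ1) + K (K (K ψ1)))
      = b2 • ((1 / 2 : ℝ) • K (K ψ2) + K (K (K ψ2))) := by
    have := congrArg K M1; simpa [map_add, map_smul] using this
  rw [h1, h2] at hmain
  rw [h1', h2', h1, h2] at M1
  rw [h1'', h2'', h1', h2', h1, h2] at M2
  linear_combination (norm := match_scalars <;> ring)
    ((1 / 2 + μ0 * b1) * (1 / 2 + μ0 * b2)) • hmain
      - ((1 / 2 + μ0 * b1) + (1 / 2 + μ0 * b2)) • M1 + M2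

/-- Recovery of the permeability from the Neumann–Poincaré equation.  Here `H` plays the
role of `L²(∂D)`, `H₀` the mean-zero subspace `L²₀(∂D)`, and `K` the adjoint
Neumann–Poincaré operator `(K⁰_D)*`, encoded through its standard spectral properties:
`½I + K` is injective, `½I - K` is injective on `H₀`, and `K` preserves `H₀`.
If `g ∈ H₀` is nonzero, `ψⱼ = (λⱼ I - K)⁻¹[g]` with `λⱼ = (μ⁽ʲ⁾+μ₀)/(2(μ⁽ʲ⁾-μ₀))`, and
`(1/(μ⁽¹⁾-μ₀)) (½I + K)[ψ₁] = (1/(μ⁽²⁾-μ₀)) (½I + K)[ψ₂]`, then `μ⁽¹⁾ = μ⁽²⁾`. -/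
theorem stmt15 {H : Type*} [NormedAddCommGroup H] [InnerProductSpace ℝ H]
    (K : H →ₗ[ℝ] H) (H₀ : Submodule ℝ H)
    (hK0 : ∀ v ∈ H₀, K v ∈ H₀)
    (hinjPlus : ∀ v : H, K v + (1 / 2 : ℝ) • v = 0 → v = 0)
    (hinjMinus : ∀ v ∈ H₀, (1 / 2 : ℝ) • v - K v = 0 → v = 0)
    (μ0 μ1 μ2 : ℝ) (hμ0 : 0 < μ0) (hμ1 : 0 < μ1) (hμ2 : 0 < μ2)
    (hne1 : μ1 ≠ μ0) (hne2 : μ2 ≠ μ0)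
    (g : H) (hg : g ∈ H₀) (hgne : g ≠ 0)
    (ψ1 ψ2 : H) (hψ1 : ψ1 ∈ H₀) (hψ2 : ψ2 ∈ H₀)
    (heq1 : ((μ1 + μ0) / (2 * (μ1 - μ0))) • ψ1 - K ψ1 = g)
    (heq2 : ((μ2 + μ0) / (2 * (μ2 - μ0))) • ψ2 - K ψ2 = g)
    (hmain : (1 / (μ1 - μ0)) • ((1 / 2 : ℝ) • ψ1 + K ψ1)
           = (1 / (μ2 - μ0)) • ((1 / 2 : ℝ) • ψ2 + K ψ2)) :
    μ1 = μ2 := by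
  by_contra hne
  have d1 : μ1 - μ0 ≠ 0 := sub_ne_zero.mpr hne1
  have d2 : μ2 - μ0 ≠ 0 := sub_ne_zero.mpr hne2
  have e1 : (μ1 + μ0) / (2 * (μ1 - μ0)) = 1 / 2 + μ0 * (1 / (μ1 - μ0)) := by
    field_simp; ring
  have e2 : (μ2 + μ0) / (2 * (μ2 - μ0)) = 1 / 2 + μ0 * (1 / (μ2 - μ0)) := by
    field_simp; ring
  have h1 : K ψ1 = (1 / 2 + μ0 * (1 / (μ1 - μ0))) • ψ1 - g := by
    rw [← e1]; linear_combination (norm := module) (-1 : ℝ) • heq1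
  have h2 : K ψ2 = (1 / 2 + μ0 * (1 / (μ2 - μ0))) • ψ2 - g := by
    rw [← e2]; linear_combination (norm := module) (-1 : ℝ) • heq2
  have big := stmt15_aux K (1 / (μ1 - μ0)) (1 / (μ2 - μ0)) μ0 g ψ1 ψ2 h1 h2 hmain
  have hb : (1 / (μ1 - μ0)) - (1 / (μ2 - μ0)) ≠ 0 := by
    intro h
    apply hne
    field_simp at h
    linarith
  have key : K (K g) = (1 / 4 : ℝ) • g := by
    rcases smul_eq_zero.mp big with h | h
    · exact absurd h hb
    · linear_combination (norm := module) (-1 : ℝ) • h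
  have hw : K ((1 / 2 : ℝ) • g - K g) + (1 / 2 : ℝ) • ((1 / 2 : ℝ) • g - K g) = 0 := by
    simp only [map_sub, map_smul, key]
    module
  exact hgne (hinjMinus g hg (hinjPlus _ hw))
end
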